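/- Let N ≥ 3, μ > (N-2)²/4, let D ⊂ ℝ^N be a bounded smooth domain containing the origin, and let f be a nonnegative function, locally bounded on the closure of D minus the origin. Then the problem -Δu = μ|x|^{-2} u + f in D \ {0}, u = 0 on ∂D, has no positive solution u ∈ C²(D \ {0}). -/

import Mathlib

open Real Filter Metric Bornology

/-- 1D second derivative test at a local minimum. -/
lemma sdt1 {h : ℝ → ℝ} {c : ℝ}
    (hd : ∀ᶠ t in nhds (0:ℝ), DifferentiableAt ℝ h t)
    (hdd : HasDerivAt (deriv h) c 0) (hmin : IsLocalMin h 0) : 0 ≤ c := by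
  by_contra hc
  push_neg at hc
  have h0 : deriv h 0 = 0 := hmin.deriv_eq_zero
  have hslope : Tendsto (slope (deriv h) 0) (nhdsWithin 0 {(0:ℝ)}ᶜ) (nhds c) :=
    hasDerivAt_iff_tendsto_slope.1 hdd
  have hneg : ∀ᶠ t in nhdsWithin 0 {(0:ℝ)}ᶜ, slope (deriv h) 0 t < 0 :=
    hslope.eventually_lt_const hc
  rw [eventually_nhdsWithin_iff] at hneg
  have hall : ∀ᶠ t in nhds (0:ℝ),
      DifferentiableAt ℝ h t ∧ (t ∈ ({(0:ℝ)}ᶜ : Set ℝ) → slope (deriv h) 0 t < 0) ∧ h 0 ≤ h t :=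
    hd.and (hneg.and hmin)
  rcases Metric.eventually_nhds_iff_ball.1 hall with ⟨δ, hδ, hball⟩
  set t := δ/2 with ht
  have htpos : 0 < t := by positivity
  have hmem : ∀ s : ℝ, 0 ≤ s → s ≤ t → s ∈ Metric.ball (0:ℝ) δ := by
    intro s h1 h2
    simp only [Metric.mem_ball, Real.dist_eq, sub_zero]
    rw [abs_of_nonneg h1]; linarith
  obtain ⟨ξ, hξ, hξeq⟩ := exists_hasDerivAt_eq_slope h (deriv h) htpos
    (fun s hs => ((hball _ (hmem s hs.1 hs.2)).1.continuousAt).continuousWithinAt)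
    (fun s hs => (hball _ (hmem s hs.1.le hs.2.le)).1.hasDerivAt)
  have hξpos : 0 < ξ := hξ.1
  have hs : slope (deriv h) 0 ξ < 0 :=
    (hball _ (hmem ξ hξpos.le hξ.2.le)).2.1 (by simpa using hξpos.ne')
  rw [slope_def_field, h0, sub_zero, sub_zero] at hs
  have hd1 : deriv h ξ < 0 := by
    rcases div_neg_iff.1 hs with ⟨h1, h2⟩ | ⟨h1, h2⟩
    · linarith
    · exact h1
  have hslope2 : (h t - h 0) / (t - 0) < 0 := hξeq ▸ hd1
  rw [sub_zero] at hslope2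
  have h4 : h t - h 0 < 0 := by
    rcases div_neg_iff.1 hslope2 with ⟨h1, h2⟩ | ⟨h1, h2⟩
    · linarith
    · exact h1
  have h5 : h 0 ≤ h t := (hball _ (hmem t htpos.le le_rfl)).2.2
  linarith

/-- Multidimensional second derivative test. -/
lemma sdt_multi {E : Type*} [NormedAddCommGroup E] [NormedSpace ℝ E]
    {w : E → ℝ} {x0 : E} (hw : ContDiffAt ℝ 2 w x0) (hmin : IsLocalMin w x0) (v : E) :
    0 ≤ fderiv ℝ (fderiv ℝ w) x0 v v := by
  have hev : ∀ᶠ y in nhds x0, DifferentiableAt ℝ w y :=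
    (hw.eventually (by simp)).mono fun y hy => hy.differentiableAt (by norm_num)
  set L : ℝ → E := fun t => x0 + t • v with hL
  have hLd : ∀ t : ℝ, HasDerivAt L v t := fun t => by
    have := ((hasDerivAt_id t).smul_const v).const_add x0
    simp only [one_smul] at this
    exact this
  have hLc : Continuous L := by continuity
  have hL0 : L 0 = x0 := by simp [hL]
  have evL : ∀ᶠ t in nhds (0:ℝ), DifferentiableAt ℝ w (L t) :=
    (hLc.continuousAt (x := 0)).eventually (hL0 ▸ hev)
  set h : ℝ → ℝ := fun t => w (L t) with hh
  have hdh : ∀ᶠ t in nhds (0:ℝ), HasDerivAt h (fderiv ℝ w (L t) v) t :=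
    evL.mono fun t ht => ht.hasFDerivAt.comp_hasDerivAt t (hLd t)
  have hd : ∀ᶠ t in nhds (0:ℝ), DifferentiableAt ℝ h t :=
    hdh.mono fun t ht => ht.differentiableAt
  have hder : ∀ᶠ t in nhds (0:ℝ), deriv h t = fderiv ℝ w (L t) v :=
    hdh.mono fun t ht => ht.deriv
  have hW : HasFDerivAt (fderiv ℝ w) (fderiv ℝ (fderiv ℝ w) x0) x0 :=
    ((hw.fderiv_right (m := 1) (by norm_num)).differentiableAt (by norm_num)).hasFDerivAt
  have hW' : HasFDerivAt (fderiv ℝ w) (fderiv ℝ (fderiv ℝ w) x0) (L 0) := by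
    rw [hL0]; exact hW
  have step1 : HasDerivAt (fun t => fderiv ℝ w (L t)) (fderiv ℝ (fderiv ℝ w) x0 v) 0 :=
    hW'.comp_hasDerivAt (0:ℝ) (hLd 0)
  have step2 : HasDerivAt (fun t => fderiv ℝ w (L t) v)
      (fderiv ℝ (fderiv ℝ w) x0 v v) 0 := by
    simpa using step1.clm_apply (hasDerivAt_const (0:ℝ) v)
  have hdd : HasDerivAt (deriv h) (fderiv ℝ (fderiv ℝ w) x0 v v) 0 :=
    step2.congr_of_eventuallyEq hder
  have hminh : IsLocalMin h 0 := by
    have := (hLc.continuousAt (x := 0)).eventually (hL0 ▸ hmin)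
    exact this.mono fun t ht => by simpa [hh, hL0] using ht
  exact sdt1 hd hdd hminh

noncomputable def lap {N : ℕ} (u : EuclideanSpace ℝ (Fin N) → ℝ)
    (x : EuclideanSpace ℝ (Fin N)) : ℝ :=
  ∑ i, iteratedFDeriv ℝ 2 u x ![EuclideanSpace.single i 1, EuclideanSpace.single i 1]

lemma lap_eq {N : ℕ} (u : EuclideanSpace ℝ (Fin N) → ℝ) (x : EuclideanSpace ℝ (Fin N)) :
    lap u x = ∑ i, fderiv ℝ (fderiv ℝ u) x (EuclideanSpace.single i 1)
      (EuclideanSpace.single i 1) := by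
  unfold lap
  congr 1; funext i
  rw [iteratedFDeriv_two_apply]
  simp

lemma lap_nonneg_of_isLocalMin {N : ℕ} {w : EuclideanSpace ℝ (Fin N) → ℝ}
    {x0 : EuclideanSpace ℝ (Fin N)} (hw : ContDiffAt ℝ 2 w x0) (hmin : IsLocalMin w x0) :
    0 ≤ lap w x0 := by
  rw [lap_eq]
  exact Finset.sum_nonneg fun i _ => sdt_multi hw hmin _

lemma sum_sq_eq_normsq {N : ℕ} (x : EuclideanSpace ℝ (Fin N)) : ∑ i, x i ^ 2 = ‖x‖ ^ 2 := by
  rw [EuclideanSpace.norm_eq, Real.sq_sqrt (by positivity)]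
  simp [Real.norm_eq_abs, sq_abs]

lemma fdf_apply_pair {N : ℕ} {w : EuclideanSpace ℝ (Fin N) → ℝ}
    {x a : EuclideanSpace ℝ (Fin N)} (hdF : DifferentiableAt ℝ (fderiv ℝ w) x) :
    fderiv ℝ (fderiv ℝ w) x a a = fderiv ℝ (fun y => fderiv ℝ w y a) x a := by
  rw [fderiv_clm_apply hdF (differentiableAt_const a)]
  simp

noncomputable def G (β γ t : ℝ) : ℝ := t ^ (-β) * Real.cos (γ * Real.log t)
noncomputable def G1 (β γ t : ℝ) : ℝ :=
  (-β * Real.cos (γ * Real.log t) - γ * Real.sin (γ * Real.log t)) * t ^ (-β - 1)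
noncomputable def G2 (β γ t : ℝ) : ℝ :=
  ((β^2 - γ^2 + β) * Real.cos (γ * Real.log t) + (2*β*γ + γ) * Real.sin (γ * Real.log t))
    * t ^ (-β - 2)

lemma hasDerivAt_G {β γ t : ℝ} (ht : 0 < t) : HasDerivAt (G β γ) (G1 β γ t) t := by
  have hp : HasDerivAt (fun s : ℝ => s ^ (-β)) (-β * t ^ (-β - 1)) t :=
    Real.hasDerivAt_rpow_const (Or.inl ht.ne')
  have hl : HasDerivAt (fun s : ℝ => γ * Real.log s) (γ * t⁻¹) t :=
    (Real.hasDerivAt_log ht.ne').const_mul γ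
  have hc : HasDerivAt (fun s : ℝ => Real.cos (γ * Real.log s))
      (-Real.sin (γ * Real.log t) * (γ * t⁻¹)) t := hl.cos
  have := hp.mul hc
  refine this.congr_deriv ?_
  unfold G1
  have key : t ^ (-β - 1) = t ^ (-β) * t⁻¹ := by
    rw [show -β - 1 = -β + (-1) by ring, Real.rpow_add ht, Real.rpow_neg_one]
  rw [key]; ring

lemma hasDerivAt_G1 {β γ t : ℝ} (ht : 0 < t) : HasDerivAt (G1 β γ) (G2 β γ t) t := by
  have hl : HasDerivAt (fun s : ℝ => γ * Real.log s) (γ * t⁻¹) t :=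
    (Real.hasDerivAt_log ht.ne').const_mul γ
  have hA : HasDerivAt (fun s : ℝ => -β * Real.cos (γ * Real.log s)
      - γ * Real.sin (γ * Real.log s))
      (-β * (-Real.sin (γ * Real.log t) * (γ * t⁻¹))
        - γ * (Real.cos (γ * Real.log t) * (γ * t⁻¹))) t :=
    (hl.cos.const_mul (-β)).sub (hl.sin.const_mul γ)
  have hq : HasDerivAt (fun s : ℝ => s ^ (-β - 1)) ((-β - 1) * t ^ (-β - 2)) t := by
    have := Real.hasDerivAt_rpow_const (x := t) (p := -β - 1) (Or.inl ht.ne')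
    convert this using 2
    ring
  have := hA.mul hq
  refine this.congr_deriv ?_
  unfold G2
  have key : t ^ (-β - 1) = t ^ (-β - 2) * t := by
    rw [show -β - 1 = -β - 2 + 1 by ring, Real.rpow_add ht, Real.rpow_one]
  rw [key]
  field_simp
  ring

lemma contDiffAt_G {β γ t : ℝ} (ht : 0 < t) : ContDiffAt ℝ 2 (G β γ) t := by
  have h1 : ContDiffAt ℝ 2 (fun s : ℝ => s ^ (-β)) t :=
    Real.contDiffAt_rpow_const_of_ne ht.ne'
  have h2 : ContDiffAt ℝ 2 (fun s : ℝ => Real.cos (γ * Real.log s)) t :=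
    Real.contDiff_cos.contDiffAt.comp t ((Real.contDiffAt_log.2 ht.ne').const_smul γ)
  exact h1.mul h2

lemma ode {N : ℕ} {μ β γ t : ℝ} (hβ : β = ((N:ℝ)-2)/4)
    (hγ : γ^2 = (μ - ((N:ℝ)-2)^2/4)/4) (ht : 0 < t) :
    4*t*G2 β γ t + 2*(N:ℝ)*G1 β γ t = -(μ * t⁻¹ * G β γ t) := by
  have hC : 4*(β^2 - γ^2 + β) - 2*(N:ℝ)*β + μ = 0 := by
    subst hβ; linear_combination (-4:ℝ) * hγ
  have hS : 4*(2*β*γ + γ) - 2*(N:ℝ)*γ = 0 := by subst hβ; ring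
  unfold G G1 G2
  have key1 : t ^ (-β - 1) = t ^ (-β - 2) * t := by
    rw [show -β - 1 = -β - 2 + 1 by ring, Real.rpow_add ht, Real.rpow_one]
  have key0 : t ^ (-β) = t ^ (-β - 2) * t * t := by
    rw [show -β = -β - 2 + 1 + 1 by ring, Real.rpow_add ht, Real.rpow_add ht, Real.rpow_one]
    ring
  rw [key1, key0]
  set C := Real.cos (γ * Real.log t)
  set S := Real.sin (γ * Real.log t)
  set P := t ^ (-β - 2)
  field_simp
  linear_combination (P*C) * hC + (P*S) * hS

section vlemmas
variable {β γ : ℝ} {N : ℕ} {x : EuclideanSpace ℝ (Fin N)}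

lemma normsq_pos (hx : x ≠ 0) : 0 < ‖x‖ ^ 2 := by
  have := norm_pos_iff.mpr hx; positivity

lemma hasFDerivAt_normsq (y : EuclideanSpace ℝ (Fin N)) :
    HasFDerivAt (fun z : EuclideanSpace ℝ (Fin N) => ‖z‖ ^ 2) (2 • (innerSL ℝ) y) y :=
  (hasStrictFDerivAt_norm_sq y).hasFDerivAt

lemma contDiffAt_v (hx : x ≠ 0) :
    ContDiffAt ℝ 2 (fun y : EuclideanSpace ℝ (Fin N) => G β γ (‖y‖ ^ 2)) x :=
  (contDiffAt_G (normsq_pos hx)).comp x (contDiff_norm_sq ℝ).contDiffAt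

lemma hasFDerivAt_v {y : EuclideanSpace ℝ (Fin N)} (hy : y ≠ 0) :
    HasFDerivAt (fun z : EuclideanSpace ℝ (Fin N) => G β γ (‖z‖ ^ 2))
      (G1 β γ (‖y‖ ^ 2) • (2 • (innerSL ℝ) y)) y := by
  have := (hasDerivAt_G (β := β) (γ := γ) (normsq_pos hy)).comp_hasFDerivAt y
    (hasFDerivAt_normsq y)
  exact this

lemma inner_single (y : EuclideanSpace ℝ (Fin N)) (i : Fin N) :
    (inner ℝ y (EuclideanSpace.single i (1:ℝ)) : ℝ) = y i := by
  rw [EuclideanSpace.inner_single_right]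
  simp

lemma lap_v (hx : x ≠ 0) :
    lap (fun y : EuclideanSpace ℝ (Fin N) => G β γ (‖y‖ ^ 2)) x
      = 4 * ‖x‖^2 * G2 β γ (‖x‖^2) + 2 * (N:ℝ) * G1 β γ (‖x‖^2) := by
  set v : EuclideanSpace ℝ (Fin N) → ℝ := fun y => G β γ (‖y‖ ^ 2) with hv
  set s := ‖x‖ ^ 2 with hs
  have hspos : 0 < s := normsq_pos hx
  have hcd : ContDiffAt ℝ 2 v x := contDiffAt_v hx
  have hdF : DifferentiableAt ℝ (fderiv ℝ v) x :=
    (hcd.fderiv_right (m := 1) (by norm_num)).differentiableAt (by norm_num)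
  rw [lap_eq]
  have key : ∀ i : Fin N,
      fderiv ℝ (fderiv ℝ v) x (EuclideanSpace.single i 1) (EuclideanSpace.single i 1)
        = 2 * G1 β γ s + 4 * G2 β γ s * (x i)^2 := by
    intro i
    rw [fdf_apply_pair hdF]
    set e := EuclideanSpace.single i (1:ℝ) with he
    have hev : (fun y => fderiv ℝ v y e) =ᶠ[nhds x]
        (fun y => G1 β γ (‖y‖^2) * (2 * y i)) := by
      filter_upwards [isOpen_compl_singleton.mem_nhds hx] with y hy
      have : fderiv ℝ v y = G1 β γ (‖y‖ ^ 2) • (2 • (innerSL ℝ) y) :=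
        (hasFDerivAt_v hy).fderiv
      rw [this]
      simp [he, inner_single]
    rw [hev.fderiv_eq]
    have hG1q : HasFDerivAt (fun y : EuclideanSpace ℝ (Fin N) => G1 β γ (‖y‖^2))
        (G2 β γ s • (2 • (innerSL ℝ) x)) x := by
      have := (hasDerivAt_G1 (β := β) (γ := γ) hspos).comp_hasFDerivAt x (hasFDerivAt_normsq x)
      exact this
    have hproj : HasFDerivAt (fun y : EuclideanSpace ℝ (Fin N) => 2 * y i)
        ((2:ℝ) • (EuclideanSpace.proj (𝕜 := ℝ) i)) x := by
      have := (EuclideanSpace.proj (𝕜 := ℝ) i).hasFDerivAt (x := x)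
      exact this.const_mul 2 |>.congr_fderiv (by ext z; simp [mul_comm])
    have := (hG1q.mul hproj).fderiv
    rw [show (fun y : EuclideanSpace ℝ (Fin N) => G1 β γ (‖y‖^2) * (2 * y i))
      = (fun y => G1 β γ (‖y‖^2)) * (fun y => 2 * y i) from rfl, this]
    simp [he, inner_single, EuclideanSpace.single_apply]
    ring
  rw [Finset.sum_congr rfl (fun i _ => key i)]
  rw [Finset.sum_add_distrib, Finset.sum_const, ← Finset.mul_sum, sum_sq_eq_normsq]
  simp [Finset.card_univ]
  ring

lemma lap_normsq (x : EuclideanSpace ℝ (Fin N)) :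
    lap (fun y : EuclideanSpace ℝ (Fin N) => ‖y‖ ^ 2) x = 2 * N := by
  have hcd : ContDiff ℝ 2 (fun y : EuclideanSpace ℝ (Fin N) => ‖y‖ ^ 2) := contDiff_norm_sq ℝ
  have hdF : DifferentiableAt ℝ (fderiv ℝ (fun y : EuclideanSpace ℝ (Fin N) => ‖y‖ ^ 2)) x :=
    ((hcd.contDiffAt).fderiv_right (m := 1) (by norm_num)).differentiableAt (by norm_num)
  rw [lap_eq]
  have key : ∀ i : Fin N,
      fderiv ℝ (fderiv ℝ (fun y : EuclideanSpace ℝ (Fin N) => ‖y‖ ^ 2)) x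
        (EuclideanSpace.single i 1) (EuclideanSpace.single i 1) = 2 := by
    intro i
    rw [fdf_apply_pair hdF]
    set e := EuclideanSpace.single i (1:ℝ) with he
    have hev : (fun y => fderiv ℝ (fun z : EuclideanSpace ℝ (Fin N) => ‖z‖ ^ 2) y e)
        = (fun y => 2 * y i) := by
      funext y
      rw [(hasStrictFDerivAt_norm_sq y).hasFDerivAt.fderiv]
      have h2 : (inner ℝ y (EuclideanSpace.single i (1:ℝ)) : ℝ) = y i := inner_single y i
      simp [he, h2]
    rw [hev]
    have hproj : HasFDerivAt (fun y : EuclideanSpace ℝ (Fin N) => 2 * y i)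
        ((2:ℝ) • (EuclideanSpace.proj (𝕜 := ℝ) i)) x := by
      have := (EuclideanSpace.proj (𝕜 := ℝ) i).hasFDerivAt (x := x)
      exact this.const_mul 2 |>.congr_fderiv (by ext z; simp [mul_comm])
    rw [hproj.fderiv]
    simp [he, EuclideanSpace.single_apply]
  rw [Finset.sum_congr rfl (fun i _ => key i)]
  simp [Finset.card_univ, mul_comm]

lemma lap_sub_smul {u v : EuclideanSpace ℝ (Fin N) → ℝ} {a : ℝ}
    (hu : ContDiffAt ℝ 2 u x) (hv : ContDiffAt ℝ 2 v x) :
    lap (fun y => u y - a * v y) x = lap u x - a * lap v x := by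
  have hud : ∀ᶠ y in nhds x, DifferentiableAt ℝ u y :=
    (hu.eventually (by simp)).mono fun y hy => hy.differentiableAt (by norm_num)
  have hvd : ∀ᶠ y in nhds x, DifferentiableAt ℝ v y :=
    (hv.eventually (by simp)).mono fun y hy => hy.differentiableAt (by norm_num)
  have hev : (fun y => fderiv ℝ (fun z => u z - a * v z) y) =ᶠ[nhds x]
      (fun y => fderiv ℝ u y - a • fderiv ℝ v y) := by
    filter_upwards [hud, hvd] with y hy1 hy2
    rw [fderiv_fun_sub hy1 (hy2.const_mul a), fderiv_const_mul hy2 a]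
  have hFu : DifferentiableAt ℝ (fderiv ℝ u) x :=
    (hu.fderiv_right (m := 1) (by norm_num)).differentiableAt (by norm_num)
  have hFv : DifferentiableAt ℝ (fderiv ℝ v) x :=
    (hv.fderiv_right (m := 1) (by norm_num)).differentiableAt (by norm_num)
  have h2 : fderiv ℝ (fderiv ℝ (fun z => u z - a * v z)) x
      = fderiv ℝ (fderiv ℝ u) x - a • fderiv ℝ (fderiv ℝ v) x := by
    rw [hev.fderiv_eq, fderiv_fun_sub (g := fun y => a • fderiv ℝ v y) hFu (hFv.const_smul a), fderiv_fun_const_smul hFv a]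
  rw [lap_eq, lap_eq, lap_eq, h2]
  rw [Finset.mul_sum, ← Finset.sum_sub_distrib]
  congr 1

end vlemmas
set_option maxHeartbeats 2000000 in
theorem stmt15 (N : ℕ) (hN : 3 ≤ N) (μ : ℝ) (hμ : ((N:ℝ) - 2) ^ 2 / 4 < μ)
    (D : Set (EuclideanSpace ℝ (Fin N))) (hDopen : IsOpen D) (hDbd : IsBounded D)
    (h0D : (0 : EuclideanSpace ℝ (Fin N)) ∈ D)
    (f : EuclideanSpace ℝ (Fin N) → ℝ)
    (hf : ∀ x ∈ closure D \ {0}, 0 ≤ f x)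
    (hfloc : ∀ x ∈ closure D \ {0}, ∃ U ∈ nhds x,
      BddAbove (f '' (U ∩ (closure D \ {0})))) :
    ¬ ∃ u : EuclideanSpace ℝ (Fin N) → ℝ,
        ContDiffOn ℝ 2 u (D \ {0}) ∧ ContinuousOn u (closure D \ {0}) ∧
        (∀ x ∈ D \ {0}, 0 < u x) ∧
        (∀ x ∈ D \ {0}, -lap u x = μ * ‖x‖ ^ (-(2:ℝ)) * u x + f x) ∧
        (∀ x ∈ frontier D, u x = 0) := by
  rintro ⟨u, hu2, hucont, hupos, hueq, hubc⟩
  have hN3 : (3:ℝ) ≤ (N:ℝ) := by exact_mod_cast hN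
  have hμpos : 0 < μ := lt_of_le_of_lt (by positivity) hμ
  set β := ((N:ℝ)-2)/4 with hβ
  set γ := Real.sqrt (μ - ((N:ℝ)-2)^2/4) / 2 with hγdef
  have hsubpos : 0 < μ - ((N:ℝ)-2)^2/4 := sub_pos.2 hμ
  have hγpos : 0 < γ := by
    rw [hγdef]
    have := Real.sqrt_pos.2 hsubpos
    positivity
  have hγsq : γ^2 = (μ - ((N:ℝ)-2)^2/4)/4 := by
    rw [hγdef, div_pow, Real.sq_sqrt hsubpos.le]
    norm_num
  have hDo : IsOpen (D \ {0}) := hDopen.sdiff isClosed_singleton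
  -- a closed ball inside D
  obtain ⟨R0, hR0, hballD⟩ := Metric.isOpen_iff.1 hDopen 0 h0D
  set R := R0/2 with hR
  have hRpos : 0 < R := by positivity
  have hRD : Metric.closedBall (0 : EuclideanSpace ℝ (Fin N)) R ⊆ D :=
    (Metric.closedBall_subset_ball (by rw [hR]; linarith)).trans hballD
  -- choose the annulus
  obtain ⟨k, hk⟩ := exists_int_lt ((γ * Real.log (R^2) - π/2) / (2*π))
  set s1 := Real.exp ((2*π*k - π/2)/γ) with hs1def
  set s2 := Real.exp ((2*π*k + π/2)/γ) with hs2def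
  have hπ : (0:ℝ) < π := Real.pi_pos
  have hs1pos : 0 < s1 := Real.exp_pos _
  have hs2pos : 0 < s2 := Real.exp_pos _
  have hs12 : s1 < s2 := by
    rw [hs1def, hs2def]
    apply Real.exp_lt_exp.2
    apply div_lt_div_of_pos_right ?_ hγpos
    linarith
  have hs2R : s2 ≤ R^2 := by
    rw [hs2def, ← Real.exp_log (show (0:ℝ) < R^2 by positivity)]
    apply Real.exp_le_exp.2
    rw [div_le_iff₀ hγpos]
    rw [lt_div_iff₀ (by positivity : (0:ℝ) < 2*π)] at hk
    have hcomm : (k:ℝ)*(2*π) = 2*π*(k:ℝ) := by ring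
    have hcomm2 : Real.log (R^2) * γ = γ * Real.log (R^2) := by ring
    linarith
  set r1 := Real.sqrt s1 with hr1def
  set r2 := Real.sqrt s2 with hr2def
  have hr1pos : 0 < r1 := Real.sqrt_pos.2 hs1pos
  have hr2pos : 0 < r2 := Real.sqrt_pos.2 hs2pos
  have hr12 : r1 < r2 := Real.sqrt_lt_sqrt hs1pos.le hs12
  have hr2R : r2 ≤ R := by
    rw [hr2def, show R = Real.sqrt (R^2) by rw [Real.sqrt_sq hRpos.le]]
    exact Real.sqrt_le_sqrt hs2R
  have hr1sq : r1^2 = s1 := Real.sq_sqrt hs1pos.le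
  have hr2sq : r2^2 = s2 := Real.sq_sqrt hs2pos.le
  -- the annulus
  set A : Set (EuclideanSpace ℝ (Fin N)) := {y | r1 ≤ ‖y‖ ∧ ‖y‖ ≤ r2} with hA
  have hAD : A ⊆ D \ {0} := by
    intro y hy
    refine ⟨hRD (mem_closedBall_zero_iff.2 (hy.2.trans hr2R)), ?_⟩
    simp only [Set.mem_singleton_iff]
    intro h0
    rw [h0] at hy
    have h1 : r1 ≤ 0 := by simpa using hy.1
    linarith
  have hAclosed : IsClosed A := by
    have : A = (fun y : EuclideanSpace ℝ (Fin N) => ‖y‖) ⁻¹' (Set.Icc r1 r2) := by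
      ext y; simp [hA, Set.mem_Icc]
    rw [this]
    exact isClosed_Icc.preimage continuous_norm
  have hAcomp : IsCompact A := by
    apply (isCompact_closedBall (0 : EuclideanSpace ℝ (Fin N)) r2).of_isClosed_subset hAclosed
    intro y hy
    exact mem_closedBall_zero_iff.2 hy.2
  have hsq_mem : ∀ y ∈ A, s1 ≤ ‖y‖^2 ∧ ‖y‖^2 ≤ s2 := by
    intro y hy
    constructor
    · rw [← hr1sq]; exact pow_le_pow_left₀ hr1pos.le hy.1 2
    · rw [← hr2sq]; exact pow_le_pow_left₀ (norm_nonneg y) hy.2 2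
  -- angle facts
  have hlogs1 : γ * Real.log s1 = 2*π*k - π/2 := by
    rw [hs1def, Real.log_exp]; field_simp
  have hlogs2 : γ * Real.log s2 = 2*π*k + π/2 := by
    rw [hs2def, Real.log_exp]; field_simp
  have hangle : ∀ t : ℝ, s1 ≤ t → t ≤ s2 →
      γ * Real.log t - (k:ℝ) * (2*π) ∈ Set.Icc (-(π/2)) (π/2) := by
    intro t h1 h2
    have hl1 : Real.log s1 ≤ Real.log t := Real.log_le_log hs1pos h1
    have hl2 : Real.log t ≤ Real.log s2 := Real.log_le_log (lt_of_lt_of_le hs1pos h1) h2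
    have a1 : γ * Real.log s1 ≤ γ * Real.log t := mul_le_mul_of_nonneg_left hl1 hγpos.le
    have a2 : γ * Real.log t ≤ γ * Real.log s2 := mul_le_mul_of_nonneg_left hl2 hγpos.le
    rw [hlogs1] at a1; rw [hlogs2] at a2
    have hcomm : (k:ℝ) * (2*π) = 2*π*(k:ℝ) := by ring
    rw [Set.mem_Icc]
    constructor <;> linarith
  -- the comparison function
  set v : EuclideanSpace ℝ (Fin N) → ℝ := fun y => G β γ (‖y‖^2) with hvdef
  have hvnonneg : ∀ y ∈ A, 0 ≤ v y := by
    intro y hy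
    obtain ⟨h1, h2⟩ := hsq_mem y hy
    have hypos : 0 < ‖y‖^2 := lt_of_lt_of_le hs1pos h1
    have hcos : 0 ≤ Real.cos (γ * Real.log (‖y‖^2)) := by
      rw [← Real.cos_sub_int_mul_two_pi (γ * Real.log (‖y‖^2)) k]
      exact Real.cos_nonneg_of_mem_Icc (hangle _ h1 h2)
    simp only [hvdef]
    unfold G
    have : (0:ℝ) < (‖y‖^2) ^ (-β) := Real.rpow_pos_of_pos hypos _
    positivity
  have hvzero : ∀ y : EuclideanSpace ℝ (Fin N), (‖y‖ = r1 ∨ ‖y‖ = r2) → v y = 0 := by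
    intro y hy
    have : Real.cos (γ * Real.log (‖y‖^2)) = 0 := by
      rcases hy with h | h
      · rw [h, hr1sq, ← Real.cos_sub_int_mul_two_pi _ k]
        rw [show γ * Real.log s1 - (k:ℝ)*(2*π) = -(π/2) by rw [hlogs1]; push_cast; ring]
        rw [Real.cos_neg, Real.cos_pi_div_two]
      · rw [h, hr2sq, ← Real.cos_sub_int_mul_two_pi _ k]
        rw [show γ * Real.log s2 - (k:ℝ)*(2*π) = π/2 by rw [hlogs2]; push_cast; ring]
        rw [Real.cos_pi_div_two]
    simp only [hvdef]; unfold G; rw [this, mul_zero]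
  -- midpoint with v > 0
  have hNpos : 0 < N := by omega
  set i0 : Fin N := ⟨0, hNpos⟩ with hi0
  set smid := Real.exp ((2*π*k)/γ) with hsmid
  have hsmid1 : s1 < smid := by
    rw [hs1def, hsmid]; apply Real.exp_lt_exp.2
    apply div_lt_div_of_pos_right ?_ hγpos; linarith
  have hsmid2 : smid < s2 := by
    rw [hs2def, hsmid]; apply Real.exp_lt_exp.2
    apply div_lt_div_of_pos_right ?_ hγpos; linarith
  set rmid := Real.sqrt smid with hrmid
  have hrmidpos : 0 < rmid := Real.sqrt_pos.2 (Real.exp_pos _)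
  set xmid : EuclideanSpace ℝ (Fin N) := rmid • EuclideanSpace.single i0 (1:ℝ) with hxmid
  have hxmidnorm : ‖xmid‖ = rmid := by
    rw [hxmid, norm_smul, EuclideanSpace.norm_single]
    simp [abs_of_nonneg hrmidpos.le]
  have hxmidA : xmid ∈ A := by
    constructor
    · rw [hxmidnorm, hr1def]; exact (Real.sqrt_lt_sqrt hs1pos.le hsmid1).le
    · rw [hxmidnorm, hr2def]; exact (Real.sqrt_lt_sqrt (Real.exp_pos _).le hsmid2).le
  have hvmid : 0 < v xmid := by
    simp only [hvdef]
    unfold G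
    have h1 : ‖xmid‖^2 = smid := by rw [hxmidnorm, hrmid, Real.sq_sqrt (Real.exp_pos _).le]
    rw [h1]
    have hcos : Real.cos (γ * Real.log smid) = 1 := by
      rw [hsmid, Real.log_exp]
      rw [show γ * ((2*π*k)/γ) = (k:ℝ) * (2*π) by field_simp]
      rw [← Real.cos_sub_int_mul_two_pi _ k]
      simp
    rw [hcos, mul_one]
    exact Real.rpow_pos_of_pos (Real.exp_pos _) _
  -- continuity on A
  have hucA : ContinuousOn u A := (hu2.continuousOn).mono hAD
  have hvA : ContinuousOn v A := by
    intro y hy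
    have hy0 : y ≠ 0 := fun h => by
      have := (hAD hy).2; simp [h] at this
    exact ((contDiffAt_v (β := β) (γ := γ) hy0).continuousAt).continuousWithinAt
  -- min of u and max of v
  obtain ⟨xm, hxmA, hxm⟩ := hAcomp.exists_isMinOn ⟨xmid, hxmidA⟩ hucA
  set m := u xm with hm
  have hmpos : 0 < m := hupos xm (hAD hxmA)
  obtain ⟨xM, hxMA, hxM⟩ := hAcomp.exists_isMaxOn ⟨xmid, hxmidA⟩ hvA
  set M := v xM with hM
  have hMpos : 0 < M := lt_of_lt_of_le hvmid (hxM hxmidA)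
  -- the sup
  set T := {t : ℝ | 0 ≤ t ∧ ∀ y ∈ A, t * v y ≤ u y} with hT
  have hT0 : (0:ℝ) ∈ T := ⟨le_rfl, fun y hy => by
    rw [zero_mul]; exact (hupos y (hAD hy)).le⟩
  have hTbdd : BddAbove T := by
    refine ⟨u xmid / v xmid, fun t ht => ?_⟩
    exact (le_div_iff₀ hvmid).2 (ht.2 xmid hxmidA)
  set t0 := sSup T with ht0def
  have ht0nonneg : 0 ≤ t0 := le_csSup hTbdd hT0
  have ht0 : ∀ y ∈ A, t0 * v y ≤ u y := by
    intro y hy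
    rcases eq_or_lt_of_le (hvnonneg y hy) with h0 | hpos
    · rw [← h0, mul_zero]; exact (hupos y (hAD hy)).le
    · have h1 : t0 ≤ u y / v y :=
        csSup_le ⟨0, hT0⟩ (fun t ht => (le_div_iff₀ hpos).2 (ht.2 y hy))
      calc t0 * v y ≤ (u y / v y) * v y := mul_le_mul_of_nonneg_right h1 hpos.le
        _ = u y := div_mul_cancel₀ _ hpos.ne'
  -- lap of v
  have hlapv : ∀ y : EuclideanSpace ℝ (Fin N), y ≠ 0 →
      lap v y = -(μ * ‖y‖^(-(2:ℝ)) * v y) := by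
    intro y hy0
    have hypos : 0 < ‖y‖^2 := normsq_pos hy0
    rw [hvdef, lap_v hy0, ode hβ hγsq hypos]
    have : ‖y‖^(-(2:ℝ)) = (‖y‖^2)⁻¹ := by
      rw [Real.rpow_neg (norm_nonneg _), show ((2:ℝ)) = ((2:ℕ):ℝ) by norm_num,
        Real.rpow_natCast]
    rw [this]
  -- KEY: minimum principle
  have hkey : ∀ y ∈ A, m ≤ u y - t0 * v y := by
    intro y hyA
    apply le_of_forall_pos_le_add
    intro ε' hε'
    set ε := ε' / (r2^2 + 1) with hε
    have hεpos : 0 < ε := by positivity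
    set w : EuclideanSpace ℝ (Fin N) → ℝ :=
      fun z => (u z - t0 * v z) - ε * ‖z‖^2 with hw
    have hwc : ContinuousOn w A := by
      apply (hucA.sub (continuousOn_const.mul hvA)).sub
      exact continuousOn_const.mul ((continuous_norm.pow 2).continuousOn)
    obtain ⟨z0, hz0A, hz0min⟩ := hAcomp.exists_isMinOn ⟨y, hyA⟩ hwc
    have hz0D : z0 ∈ D \ {0} := hAD hz0A
    have hz0ne : z0 ≠ 0 := fun h => by simp [h] at hz0D
    have hz0b : ‖z0‖ = r1 ∨ ‖z0‖ = r2 := by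
      by_contra hb
      push_neg at hb
      have hS1 : r1 < ‖z0‖ := lt_of_le_of_ne hz0A.1 (Ne.symm hb.1)
      have hS2 : ‖z0‖ < r2 := lt_of_le_of_ne hz0A.2 hb.2
      -- z0 is an interior local min
      set S : Set (EuclideanSpace ℝ (Fin N)) := {z | r1 < ‖z‖ ∧ ‖z‖ < r2} with hSdef
      have hSopen : IsOpen S := by
        have : S = (fun z : EuclideanSpace ℝ (Fin N) => ‖z‖) ⁻¹' (Set.Ioo r1 r2) := by
          ext z; simp [hSdef, Set.mem_Ioo]
        rw [this]
        exact isOpen_Ioo.preimage continuous_norm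
      have hSsub : S ⊆ A := fun z hz => ⟨hz.1.le, hz.2.le⟩
      have hAnhds : A ∈ nhds z0 :=
        Filter.mem_of_superset (hSopen.mem_nhds ⟨hS1, hS2⟩) hSsub
      have hloc : IsLocalMin w z0 := hz0min.isLocalMin hAnhds
      have hcu : ContDiffAt ℝ 2 u z0 := hu2.contDiffAt (hDo.mem_nhds hz0D)
      have hcv : ContDiffAt ℝ 2 v z0 := contDiffAt_v hz0ne
      have hcq : ContDiffAt ℝ 2 (fun z : EuclideanSpace ℝ (Fin N) => ‖z‖^2) z0 :=
        (contDiff_norm_sq ℝ).contDiffAt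
      have hcw : ContDiffAt ℝ 2 w z0 :=
        (hcu.sub (contDiffAt_const.mul hcv)).sub (contDiffAt_const.mul hcq)
      have h1 : 0 ≤ lap w z0 := lap_nonneg_of_isLocalMin hcw hloc
      have e1 : lap w z0 = lap (fun z => u z - t0 * v z) z0
          - ε * lap (fun z : EuclideanSpace ℝ (Fin N) => ‖z‖^2) z0 :=
        lap_sub_smul (hcu.sub (contDiffAt_const.mul hcv)) hcq
      have e2 : lap (fun z => u z - t0 * v z) z0 = lap u z0 - t0 * lap v z0 :=
        lap_sub_smul hcu hcv
      have e3 : lap (fun z : EuclideanSpace ℝ (Fin N) => ‖z‖^2) z0 = 2*N := lap_normsq z0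
      have hpde := hueq z0 hz0D
      have h4 : lap v z0 = -(μ * ‖z0‖^(-(2:ℝ)) * v z0) := hlapv z0 hz0ne
      have hfz : 0 ≤ f z0 := hf z0 ⟨subset_closure hz0D.1, hz0D.2⟩
      have hw0 : 0 ≤ u z0 - t0 * v z0 := sub_nonneg.2 (ht0 z0 hz0A)
      have hrpow : 0 < ‖z0‖^(-(2:ℝ)) :=
        Real.rpow_pos_of_pos (norm_pos_iff.2 hz0ne) _
      have hlapu : lap u z0 = -(μ * ‖z0‖^(-(2:ℝ)) * u z0 + f z0) := by linarith
      have hcomb : lap w z0 = -(μ * ‖z0‖^(-(2:ℝ)) * (u z0 - t0 * v z0)) - f z0 - ε*(2*N) := by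
        rw [e1, e2, e3, hlapu, h4]; ring
      have term1 : 0 ≤ μ * ‖z0‖^(-(2:ℝ)) * (u z0 - t0 * v z0) :=
        mul_nonneg (mul_pos hμpos hrpow).le hw0
      have term2 : 0 < ε * (2*N) := mul_pos hεpos (by linarith : (0:ℝ) < 2*N)
      have hneg2 : lap w z0 < 0 := by rw [hcomb]; linarith
      linarith
    -- boundary case
    have hvz0 : v z0 = 0 := hvzero z0 hz0b
    have hmz0 : m ≤ u z0 := hxm hz0A
    have hch : w z0 ≤ w y := hz0min hyA
    have hz0n : ‖z0‖ ≤ r2 := hz0A.2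
    have hwz0 : m - ε * r2^2 ≤ w z0 := by
      simp only [hw, hvz0, mul_zero, sub_zero]
      have : ε * ‖z0‖^2 ≤ ε * r2^2 := by
        apply mul_le_mul_of_nonneg_left _ hεpos.le
        exact pow_le_pow_left₀ (norm_nonneg _) hz0n 2
      linarith
    have hwy : w y ≤ u y - t0 * v y := by
      simp only [hw]
      have : 0 ≤ ε * ‖y‖^2 := by positivity
      linarith
    have hεr : ε * r2^2 ≤ ε' := by
      have h1 : (0:ℝ) < r2^2 + 1 := by positivity
      have h2 : ε * (r2^2 + 1) = ε' := by
        rw [hε]; field_simp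
      linarith
    linarith
  -- conclusion
  have hnew : t0 + m/M ∈ T := by
    constructor
    · positivity
    · intro y hy
      have h1 := ht0 y hy
      have h2 : v y ≤ M := hxM hy
      have h3 : 0 ≤ v y := hvnonneg y hy
      have h4 := hkey y hy
      have h5 : (m/M) * v y ≤ m := by
        rw [div_mul_eq_mul_div, div_le_iff₀ hMpos]
        exact mul_le_mul_of_nonneg_left h2 hmpos.le
      have hexp : (t0 + m/M) * v y = t0 * v y + (m/M) * v y := by ring
      linarith
  have hle : t0 + m/M ≤ t0 := le_csSup hTbdd hnew
  have : 0 < m/M := by positivity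
  linarith
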